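/- Let v, v_* ∈ ℝ³ with v ≠ v_*, let σ ∈ 𝕊² be a unit vector, let κ, ι ∈ [0,1], and set a = κ + ι and t = ((v − v_*)/‖v − v_*‖)·σ. Then ‖v(κ) − v_*(ι)‖² = ‖v − v_*‖² · ( (1 + t)/2 + (1 − a)² (1 − t)/2 ). In particular, if t ≥ 0 then (1/2)‖v − v_*‖² ≤ ‖v(κ) − v_*(ι)‖² ≤ ‖v − v_*‖²; equivalently, the factor ψ_a(θ) = (cos²(θ/2) + (1 − a)² sin²(θ/2))^{−1/2} satisfies 1 ≤ ψ_a(θ) ≤ √2 for all a ∈ [0, 2] and θ ∈ [0, π/2]. -/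

import Mathlib

open MeasureTheory
open scoped ENNReal

noncomputable section

/-! Since `v(κ) − v_*(ι) = (1 − a/2)(v − v_*) + (a‖v − v_*‖/2)σ` and `⟪v − v_*, σ⟫ = t‖v − v_*‖`,
expanding the square gives the identity. Its factor `(1 + t)/2 + (1 − a)²(1 − t)/2` is a convex
combination of `1` and `(1 − a)² ∈ [0, 1]` putting weight `(1 + t)/2 ≥ 1/2` on `1` when `t ≥ 0`,
so it lies in `[1/2, 1]`. By the half-angle formulas, `ψ_a(θ)⁻²` is this factor at `t = cos θ`. -/

abbrev R3 : Type := EuclideanSpace ℝ (Fin 3)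

def deviationFactor (a t : ℝ) : ℝ := (1 + t) / 2 + (1 - a) ^ 2 * ((1 - t) / 2)

lemma deviationFactor_mem_Icc {a t : ℝ} (ha : a ∈ Set.Icc (0 : ℝ) 2)
    (ht : t ∈ Set.Icc (0 : ℝ) 1) :
    deviationFactor a t ∈ Set.Icc (2⁻¹ : ℝ) 1 := by
  obtain ⟨ha0, ha2⟩ := ha
  obtain ⟨ht0, ht1⟩ := ht
  have hq : (1 - a) ^ 2 ≤ 1 := by nlinarith
  unfold deviationFactor
  constructor <;> nlinarith [mul_nonneg (sq_nonneg (1 - a)) (sub_nonneg.mpr ht1)]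

lemma rpow_neg_inv_two_mem_Icc {x : ℝ} (hx : x ∈ Set.Icc (2⁻¹ : ℝ) 1) :
    x ^ (-(2⁻¹ : ℝ)) ∈ Set.Icc 1 (Real.sqrt 2) := by
  obtain ⟨hx2, hx1⟩ := hx
  have hx0 : 0 < x := lt_of_lt_of_le (by norm_num) hx2
  rw [Real.rpow_neg hx0.le, ← one_div (2 : ℝ), ← Real.sqrt_eq_rpow]
  constructor
  · exact (one_le_inv₀ (Real.sqrt_pos.2 hx0)).2 (Real.sqrt_le_one.2 hx1)
  · calc (√x)⁻¹ ≤ (√2⁻¹)⁻¹ := inv_anti₀ (by positivity) (Real.sqrt_le_sqrt hx2)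
      _ = √2 := by rw [Real.sqrt_inv, inv_inv]

lemma cos_sq_half_add_mul_sin_sq_half (a θ : ℝ) :
    Real.cos (θ / 2) ^ 2 + (1 - a) ^ 2 * Real.sin (θ / 2) ^ 2
      = deviationFactor a (Real.cos θ) := by
  rw [Real.cos_sq, Real.sin_sq_eq_half_sub, mul_div_cancel₀ θ two_ne_zero, deviationFactor]
  ring

section InnerProductSpace

variable {E : Type*} [NormedAddCommGroup E] [InnerProductSpace ℝ E]

lemma inner_normalize_le_norm (u σ : E) : inner ℝ (‖u‖⁻¹ • u) σ ≤ ‖σ‖ := by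
  calc inner ℝ (‖u‖⁻¹ • u) σ ≤ ‖‖u‖⁻¹ • u‖ * ‖σ‖ := real_inner_le_norm _ _
    _ ≤ 1 * ‖σ‖ := by
      gcongr
      rw [norm_smul, norm_inv, norm_norm]
      exact inv_mul_le_one
    _ = ‖σ‖ := one_mul _

lemma inner_eq_inner_normalize_mul_norm (u σ : E) :
    inner ℝ u σ = inner ℝ (‖u‖⁻¹ • u) σ * ‖u‖ := by
  rcases eq_or_ne u 0 with rfl | hu
  · simp
  · rw [real_inner_smul_left]
    field_simp

lemma norm_sq_smul_add_smul_of_norm_eq_one (u σ : E) (hσ : ‖σ‖ = 1) (a : ℝ) :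
    ‖(1 - a / 2) • u + (a * (‖u‖ / 2)) • σ‖ ^ 2
      = ‖u‖ ^ 2 * deviationFactor a (inner ℝ (‖u‖⁻¹ • u) σ) := by
  rw [norm_add_sq_real, norm_smul, norm_smul, real_inner_smul_left, real_inner_smul_right,
    inner_eq_inner_normalize_mul_norm u σ, hσ, Real.norm_eq_abs, Real.norm_eq_abs, mul_pow,
    mul_pow, sq_abs, sq_abs, deviationFactor]
  ring

end InnerProductSpace

theorem statement1 (v vs σ : R3) (hσ : ‖σ‖ = 1)
    (κ ι : ℝ) (hκ : κ ∈ Set.Icc (0:ℝ) 1) (hι : ι ∈ Set.Icc (0:ℝ) 1) :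
    let v' : R3 := (2⁻¹ : ℝ) • (v + vs) + (‖v - vs‖ / 2) • σ
    let vs' : R3 := (2⁻¹ : ℝ) • (v + vs) - (‖v - vs‖ / 2) • σ
    let vκ : R3 := κ • v' + (1 - κ) • v
    let vι : R3 := ι • vs' + (1 - ι) • vs
    let a : ℝ := κ + ι
    let t : ℝ := inner ℝ (‖v - vs‖⁻¹ • (v - vs)) σ
    (‖vκ - vι‖ ^ 2 = ‖v - vs‖ ^ 2 * ((1 + t) / 2 + (1 - a) ^ 2 * ((1 - t) / 2))) ∧
    (0 ≤ t → (2⁻¹ : ℝ) * ‖v - vs‖ ^ 2 ≤ ‖vκ - vι‖ ^ 2 ∧ ‖vκ - vι‖ ^ 2 ≤ ‖v - vs‖ ^ 2) ∧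
    (∀ a' θ : ℝ, a' ∈ Set.Icc (0:ℝ) 2 → θ ∈ Set.Icc (0:ℝ) (Real.pi / 2) →
      1 ≤ (Real.cos (θ / 2) ^ 2 + (1 - a') ^ 2 * Real.sin (θ / 2) ^ 2) ^ (-(2⁻¹ : ℝ)) ∧
      (Real.cos (θ / 2) ^ 2 + (1 - a') ^ 2 * Real.sin (θ / 2) ^ 2) ^ (-(2⁻¹ : ℝ))
        ≤ Real.sqrt 2) := by
  intro v' vs' vκ vι a t
  have hdiff : vκ - vι = (1 - a / 2) • (v - vs) + (a * (‖v - vs‖ / 2)) • σ := by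
    simp only [vκ, vι, v', vs', a]
    module
  have key : ‖vκ - vι‖ ^ 2 = ‖v - vs‖ ^ 2 * deviationFactor a t := by
    rw [hdiff, norm_sq_smul_add_smul_of_norm_eq_one _ _ hσ]
  have ha : a ∈ Set.Icc (0 : ℝ) 2 := ⟨add_nonneg hκ.1 hι.1, by linarith [hκ.2, hι.2]⟩
  refine ⟨key, fun ht0 => ?_, fun a' θ ha' hθ => ?_⟩
  · have ht : t ∈ Set.Icc (0 : ℝ) 1 := ⟨ht0, hσ ▸ inner_normalize_le_norm _ _⟩
    obtain ⟨hlo, hhi⟩ := deviationFactor_mem_Icc ha ht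
    rw [key]
    constructor
    · rw [mul_comm]
      exact mul_le_mul_of_nonneg_left hlo (sq_nonneg _)
    · exact mul_le_of_le_one_right (sq_nonneg _) hhi
  · have hcos : Real.cos θ ∈ Set.Icc (0 : ℝ) 1 :=
      ⟨Real.cos_nonneg_of_mem_Icc ⟨by linarith [hθ.1, Real.pi_pos], hθ.2⟩, Real.cos_le_one θ⟩
    rw [cos_sq_half_add_mul_sin_sq_half]
    exact rpow_neg_inv_two_mem_Icc (deviationFactor_mem_Icc ha' hcos)

end
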